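/- arXiv:1812.00472 — 4 statements merged into one kernel-verified Lean document; each statement's English description precedes it below -/
import Mathlib

section
/- For all integers d ≥ 1 and k ≥ 2, and all sufficiently large n, there exists a linear nearly-d-regular k-uniform hypergraph on n vertices, i.e., one in which additionally every two distinct edges intersect in at most one vertex. -/
/-!
Write `n = k * m + r` with `r < k` and `m ≥ d * k`. The vertices are a grid `Fin k × ZMod m`
(rows × columns) together with `r` spare vertices. The lines `{(i, j + c * i)}` of slopes
`c = 1, …, d - 1` cover every grid vertex `d - 1` times, and two distinct lines meet at most once:
`(c - c') * (i - i') ≡ 0 [MOD m]` forces `c = c'` or `i = i'` because `d * k ≤ m`.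
Every column `x` adds one more edge: the whole column if `x ≥ d * r`, and otherwise the column
with its row-`0` vertex traded for the spare vertex `x / d`, so each spare vertex gets degree `d`.
The row-`0` vertices of the first `d * r` columns, left with degree `d - 1`, are covered by
`d * r / k` disjoint blocks of `k` consecutive ones; only `d * r % k < k` of them stay deficient.
-/

/-- The degree of a vertex in a hypergraph: the number of edges containing it. -/
def hyperDeg {V : Type*} [DecidableEq V] (H : Finset (Finset V)) (v : V) : ℕ :=
  (H.filter (fun e => v ∈ e)).card

open Finset

section General

variable {ι V W : Type*} [DecidableEq V] [DecidableEq W]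

structure IsLinearNearlyRegular [Fintype V] (k d : ℕ) (H : Finset (Finset V)) : Prop where
  card_eq : ∀ e ∈ H, #e = k
  hyperDeg_eq : ∀ v, hyperDeg H v = d ∨ hyperDeg H v = d - 1
  card_filter_hyperDeg_lt : #{v | hyperDeg H v = d - 1} < k
  card_inter_le_one : ∀ e ∈ H, ∀ f ∈ H, e ≠ f → #(e ∩ f) ≤ 1

lemma hyperDeg_map_equiv (H : Finset (Finset V)) (e : V ≃ W) (v : V) :
    hyperDeg (H.map (mapEmbedding e.toEmbedding).toEmbedding) (e v) = hyperDeg H v := by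
  rw [hyperDeg, hyperDeg, filter_map, card_map]
  congr 2
  ext f
  simp

lemma IsLinearNearlyRegular.map_equiv [Fintype V] [Fintype W] {k d : ℕ} {H : Finset (Finset V)}
    (hH : IsLinearNearlyRegular k d H) (e : V ≃ W) :
    IsLinearNearlyRegular k d (H.map (mapEmbedding e.toEmbedding).toEmbedding) where
  card_eq := by
    simp only [mem_map, forall_exists_index, and_imp]
    rintro _ f hf rfl
    simpa using hH.card_eq f hf
  hyperDeg_eq w := by
    obtain ⟨v, rfl⟩ := e.surjective w
    rw [hyperDeg_map_equiv]
    exact hH.hyperDeg_eq v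
  card_filter_hyperDeg_lt := by
    rw [← card_equiv e (s := {v | hyperDeg H v = d - 1}) (by simp [hyperDeg_map_equiv])]
    exact hH.card_filter_hyperDeg_lt
  card_inter_le_one := by
    simp only [mem_map, forall_exists_index, and_imp]
    rintro _ f hf rfl _ g hg rfl hfg
    simp only [RelEmbedding.coe_toEmbedding, mapEmbedding_apply, ← map_inter, card_map]
    exact hH.card_inter_le_one f hf g hg (fun h => hfg (h ▸ rfl))

lemma hyperDeg_image [DecidableEq ι] {s : Finset ι} {f : ι → Finset V} (hf : Set.InjOn f s)
    (v : V) : hyperDeg (s.image f) v = #{p ∈ s | v ∈ f p} := by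
  rw [hyperDeg, filter_image, card_image_of_injOn (hf.mono (by intro p hp; simp_all))]

lemma injOn_of_card_inter_le_one {s : Finset ι} {f : ι → Finset V} {k : ℕ} (hk : 2 ≤ k)
    (hcard : ∀ p ∈ s, #(f p) = k)
    (hinter : ∀ p ∈ s, ∀ q ∈ s, p ≠ q → #(f p ∩ f q) ≤ 1) : Set.InjOn f s := by
  intro p hp q hq hpq
  by_contra hne
  have := hinter p hp q hq hne
  rw [hpq, inter_self, hcard q hq] at this
  omega

lemma card_filter_disjSum {α β : Type*} (s : Finset α) (t : Finset β) (P : α ⊕ β → Prop)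
    [DecidablePred P] :
    #{x ∈ s.disjSum t | P x} = #{a ∈ s | P (.inl a)} + #{b ∈ t | P (.inr b)} := by
  simp only [card_filter, sum_disjSum]

end General

lemma ZMod.card_filter_val_mem {m : ℕ} [NeZero m] {s : Finset ℕ} (hs : ∀ q ∈ s, q < m) :
    #{x : ZMod m | x.val ∈ s} = #s := by
  refine card_nbij' ZMod.val Nat.cast (fun x hx => by simpa using hx) (fun q hq => ?_)
    (fun x _ => ZMod.natCast_zmod_val x) (fun q hq => ZMod.val_cast_of_lt (hs q hq))
  simpa [ZMod.val_cast_of_lt (hs q hq)] using hq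

lemma eq_or_eq_of_mul_add_mul_modEq {c c' i i' d k m : ℕ} (hc : c < d) (hc' : c' < d)
    (hi : i < k) (hi' : i' < k) (hm : d * k ≤ m)
    (h : c * i + c' * i' ≡ c' * i + c * i' [MOD m]) : c = c' ∨ i = i' := by
  have hdvd : (m : ℤ) ∣ ((c : ℤ) - c') * ((i' : ℤ) - i) := by
    have := Nat.modEq_iff_dvd.1 h
    push_cast at this
    convert this using 1
    ring
  have habs : |((c : ℤ) - c') * ((i' : ℤ) - i)| < m := by
    rw [abs_mul]
    calc |(c : ℤ) - c'| * |(i' : ℤ) - i| < d * k := by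
          apply mul_lt_mul'' <;> first | positivity | (rw [abs_lt]; constructor <;> omega)
      _ ≤ m := by exact_mod_cast hm
  rcases mul_eq_zero.1 (Int.eq_zero_of_abs_lt_dvd hdvd habs) with h | h <;> omega

namespace LinearNearlyRegular

abbrev Vertex (k m r : ℕ) := (Fin k × ZMod m) ⊕ Fin r

variable {k m r d : ℕ}

def line (c : ℕ) (j : ZMod m) : Finset (Vertex k m r) :=
  univ.image fun i : Fin k => .inl (i, j + ((c * i : ℕ) : ZMod m))

@[simp]
lemma inl_mem_line {c : ℕ} {j y : ZMod m} {i : Fin k} :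
    (.inl (i, y) : Vertex k m r) ∈ line c j ↔ y = j + ((c * i : ℕ) : ZMod m) := by
  simp [line, eq_comm]

@[simp]
lemma inr_notMem_line {c : ℕ} {j : ZMod m} {s : Fin r} :
    (.inr s : Vertex k m r) ∉ line c j := by
  simp [line]

lemma card_line_inter_line_le_one {c c' : ℕ} {j j' : ZMod m} (hc : c < d) (hc' : c' < d)
    (hm : d * k ≤ m) (hne : (c, j) ≠ (c', j')) :
    #(line c j ∩ line c' j' : Finset (Vertex k m r)) ≤ 1 := by
  rw [card_le_one]
  rintro (⟨i, y⟩ | s) ha (⟨i', y'⟩ | s') hb <;> simp only [mem_inter, inl_mem_line,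
    inr_notMem_line, and_false] at ha hb ⊢
  obtain ⟨rfl, e⟩ := ha
  obtain ⟨rfl, e'⟩ := hb
  have hmod : c * i + c' * i' ≡ c' * i + c * i' [MOD m] := by
    rw [← ZMod.natCast_eq_natCast_iff]
    push_cast at e e' ⊢
    linear_combination e - e'
  rcases eq_or_eq_of_mul_add_mul_modEq hc hc' i.isLt i'.isLt hm hmod with rfl | hi
  · exact absurd (by simpa using e) (hne ∘ congrArg (c, ·))
  · obtain rfl := Fin.ext hi
    rfl

lemma card_line {c : ℕ} {j : ZMod m} : #(line c j : Finset (Vertex k m r)) = k := by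
  rw [line, card_image_of_injective _ fun i i' h => (Prod.ext_iff.1 (Sum.inl_injective h)).1,
    card_univ, Fintype.card_fin]

lemma card_filter_inl_mem_line [NeZero m] {i : Fin k} {y : ZMod m} :
    #{q ∈ Ico 1 d ×ˢ univ | (.inl (i, y) : Vertex k m r) ∈ line q.1 q.2} = d - 1 := by
  have : {q ∈ Ico 1 d ×ˢ (univ : Finset (ZMod m)) |
        (.inl (i, y) : Vertex k m r) ∈ line q.1 q.2} = (Ico 1 d).map
        ⟨fun c => (c, y - ((c * i : ℕ) : ZMod m)), fun _ _ h => congrArg Prod.fst h⟩ := by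
    ext ⟨c, j⟩
    simp [eq_sub_iff_add_eq, and_comm, eq_comm]
  rw [this, card_map, Nat.card_Ico]

variable [NeZero k]

def column (d : ℕ) (x : ZMod m) : Finset (Vertex k m r) :=
  if h : x.val < d * r then
    insert (.inr ⟨x.val / d, Nat.div_lt_of_lt_mul h⟩) ((line 0 x).erase (.inl (0, x)))
  else line 0 x

def block (l : ℕ) : Finset (Vertex k m r) :=
  univ.image fun i : Fin k => .inl (0, ((l * k + i : ℕ) : ZMod m))

@[simp]
lemma inl_mem_column {x y : ZMod m} {i : Fin k} :
    (.inl (i, y) : Vertex k m r) ∈ column d x ↔ y = x ∧ (i ≠ 0 ∨ d * r ≤ x.val) := by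
  unfold column
  split_ifs with h
  · simp only [mem_insert, mem_erase, inl_mem_line, reduceCtorEq, false_or, ne_eq,
      Sum.inl.injEq, Prod.mk.injEq, Nat.zero_mul, Nat.cast_zero, add_zero, h.not_ge, or_false]
    tauto
  · simp [not_lt.1 h]

@[simp]
lemma inr_mem_column {x : ZMod m} {s : Fin r} :
    (.inr s : Vertex k m r) ∈ column d x ↔ x.val < d * r ∧ x.val / d = s := by
  unfold column
  split_ifs with h <;> simp [h, Fin.ext_iff, eq_comm]

lemma eq_zero_of_inl_mem_block {l : ℕ} {y : ZMod m} {i : Fin k}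
    (h : (.inl (i, y) : Vertex k m r) ∈ block l) : i = 0 := by
  obtain ⟨a, -, ha⟩ := mem_image.1 h
  exact (Prod.ext_iff.1 (Sum.inl_injective ha)).1.symm

@[simp]
lemma inr_notMem_block {l : ℕ} {s : Fin r} : (.inr s : Vertex k m r) ∉ block l := by
  simp [block]

lemma inl_mem_block {l : ℕ} (hl : (l + 1) * k ≤ m) {y : ZMod m} {i : Fin k} :
    (.inl (i, y) : Vertex k m r) ∈ block l ↔ i = 0 ∧ y.val / k = l := by
  have hk : 0 < k := Nat.pos_of_neZero k
  simp only [block, mem_image, mem_univ, true_and, Sum.inl.injEq, Prod.mk.injEq]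
  constructor
  · rintro ⟨a, rfl, rfl⟩
    have : l * k + a < m := by nlinarith [a.isLt]
    rw [ZMod.val_cast_of_lt this, Nat.div_eq_iff hk]
    omega
  · rintro ⟨rfl, hy⟩
    have : NeZero m := ⟨by nlinarith⟩
    refine ⟨⟨y.val % k, Nat.mod_lt _ hk⟩, rfl, ?_⟩
    rw [← hy, mul_comm, Nat.div_add_mod, ZMod.natCast_zmod_val]

lemma line_inter_column_subset {c : ℕ} {j x : ZMod m} :
    (line c j ∩ column d x : Finset (Vertex k m r)) ⊆ line c j ∩ line 0 x := by
  rintro (⟨i, y⟩ | s) <;> simp +contextual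

lemma card_line_inter_column_le_one {c : ℕ} {j x : ZMod m} (hc0 : c ≠ 0) (hc : c < d)
    (hm : d * k ≤ m) : #(line c j ∩ column d x : Finset (Vertex k m r)) ≤ 1 :=
  (card_le_card line_inter_column_subset).trans
    (card_line_inter_line_le_one hc (by omega) hm (by simp [hc0]))

lemma card_column_inter_column_le_one {x x' : ZMod m} (hne : x ≠ x') :
    #(column d x ∩ column d x' : Finset (Vertex k m r)) ≤ 1 := by
  rw [card_le_one]
  rintro (⟨i, y⟩ | s) ha (⟨i', y'⟩ | s') hb <;>
    simp only [mem_inter, inl_mem_column, inr_mem_column] at ha hb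
  · exact absurd (ha.1.1.symm.trans ha.2.1) hne
  · exact absurd (ha.1.1.symm.trans ha.2.1) hne
  · exact absurd (hb.1.1.symm.trans hb.2.1) hne
  · exact congrArg _ (Fin.ext (ha.1.2.symm.trans hb.1.2))

lemma card_line_inter_block_le_one {c l : ℕ} {j : ZMod m} :
    #(line c j ∩ block l : Finset (Vertex k m r)) ≤ 1 := by
  refine card_le_one_iff_subset_singleton.2 ⟨.inl (0, j), ?_⟩
  rintro (⟨i, y⟩ | s) h <;> simp only [mem_inter, inl_mem_line, inr_notMem_line] at h
  · obtain rfl := eq_zero_of_inl_mem_block h.2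
    simp [h.1]
  · exact h.1.elim

lemma card_column_inter_block_le_one {l : ℕ} {x : ZMod m} :
    #(column d x ∩ block l : Finset (Vertex k m r)) ≤ 1 := by
  refine card_le_one_iff_subset_singleton.2 ⟨.inl (0, x), ?_⟩
  rintro (⟨i, y⟩ | s) h <;> simp only [mem_inter, inl_mem_column, inr_notMem_block] at h
  · obtain rfl := eq_zero_of_inl_mem_block h.2
    simp [h.1.1]
  · exact h.2.elim

lemma disjoint_block_block {l l' : ℕ} (hl : (l + 1) * k ≤ m) (hl' : (l' + 1) * k ≤ m)
    (hne : l ≠ l') : Disjoint (block l : Finset (Vertex k m r)) (block l') := by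
  rw [disjoint_left]
  rintro (⟨i, y⟩ | s) h h' <;> simp_all [inl_mem_block]

lemma card_column {x : ZMod m} : #(column d x : Finset (Vertex k m r)) = k := by
  unfold column
  split_ifs
  · rw [card_insert_of_notMem (by simp), card_erase_of_mem (by simp), card_line,
      Nat.sub_add_cancel NeZero.one_le]
  · exact card_line

lemma card_block {l : ℕ} (hl : (l + 1) * k ≤ m) : #(block l : Finset (Vertex k m r)) = k := by
  refine (card_image_of_injective _ fun a b h => Fin.ext ?_).trans (by simp)
  have ha : l * k + a < m := by nlinarith [a.isLt]
  have hb : l * k + b < m := by nlinarith [b.isLt]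
  have := congrArg ZMod.val (Prod.ext_iff.1 (Sum.inl_injective h)).2
  rw [ZMod.val_cast_of_lt ha, ZMod.val_cast_of_lt hb] at this
  omega

def edge (d : ℕ) : (ℕ × ZMod m) ⊕ ZMod m ⊕ ℕ → Finset (Vertex k m r)
  | .inl (c, j) => line c j
  | .inr (.inl x) => column d x
  | .inr (.inr l) => block l

lemma succ_mul_le_of_lt_div {l : ℕ} (hl : l < d * r / k) (hr : r < k) (hm : d * k ≤ m) :
    (l + 1) * k ≤ m :=
  calc (l + 1) * k ≤ d * r := (Nat.le_div_iff_mul_le (Nat.pos_of_neZero k)).1 hl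
    _ ≤ d * k := Nat.mul_le_mul_left d hr.le
    _ ≤ m := hm

lemma card_filter_inl_mem_block (hr : r < k) (hm : d * k ≤ m) {i : Fin k} {y : ZMod m} :
    #{l ∈ range (d * r / k) | (.inl (i, y) : Vertex k m r) ∈ block l} =
      if i = 0 ∧ y.val < d * r / k * k then 1 else 0 := by
  have hk : 0 < k := Nat.pos_of_neZero k
  have : {l ∈ range (d * r / k) | (.inl (i, y) : Vertex k m r) ∈ block l} =
      {l ∈ range (d * r / k) | i = 0 ∧ y.val / k = l} :=
    filter_congr fun l hl => inl_mem_block (succ_mul_le_of_lt_div (mem_range.1 hl) hr hm)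
  have hdiv := Nat.div_lt_iff_lt_mul (x := y.val) (y := d * r / k) hk
  rw [this]
  split_ifs with h
  · rw [card_eq_one]
    exact ⟨y.val / k, by ext l; simp only [mem_filter, mem_range, mem_singleton]; omega⟩
  · rw [card_eq_zero, filter_eq_empty_iff]
    intro l hl
    simp only [mem_range] at hl
    omega

variable (k m r d) [NeZero m]

def index : Finset ((ℕ × ZMod m) ⊕ ZMod m ⊕ ℕ) :=
  (Ico 1 d ×ˢ univ).disjSum (univ.disjSum (range (d * r / k)))

def hypergraph : Finset (Finset (Vertex k m r)) :=
  (index k m r d).image (edge d)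

variable {k m r d}

lemma card_edge (hr : r < k) (hm : d * k ≤ m) {p : (ℕ × ZMod m) ⊕ ZMod m ⊕ ℕ}
    (hp : p ∈ index k m r d) : #(edge d p : Finset (Vertex k m r)) = k := by
  rcases p with ⟨c, j⟩ | x | l
  · exact card_line
  · exact card_column
  · simp only [index, inr_mem_disjSum, mem_range] at hp
    exact card_block (succ_mul_le_of_lt_div hp hr hm)

lemma card_edge_inter_edge_le_one (hr : r < k) (hm : d * k ≤ m)
    {p q : (ℕ × ZMod m) ⊕ ZMod m ⊕ ℕ} (hp : p ∈ index k m r d) (hq : q ∈ index k m r d)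
    (hpq : p ≠ q) : #(edge d p ∩ edge d q : Finset (Vertex k m r)) ≤ 1 := by
  rcases p with ⟨c, j⟩ | x | l <;> rcases q with ⟨c', j'⟩ | x' | l' <;>
    simp only [index, inl_mem_disjSum, inr_mem_disjSum, mem_product, mem_Ico, mem_univ,
      and_true, mem_range] at hp hq <;> simp only [edge]
  · exact card_line_inter_line_le_one hp.2 hq.2 hm (fun h => hpq (congrArg _ h))
  · exact card_line_inter_column_le_one (by omega) hp.2 hm
  · exact card_line_inter_block_le_one
  · rw [inter_comm]
    exact card_line_inter_column_le_one (by omega) hq.2 hm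
  · exact card_column_inter_column_le_one (fun h => hpq (by rw [h]))
  · exact card_column_inter_block_le_one
  · rw [inter_comm]
    exact card_line_inter_block_le_one
  · rw [inter_comm]
    exact card_column_inter_block_le_one
  · rw [disjoint_iff_inter_eq_empty.1 (disjoint_block_block (succ_mul_le_of_lt_div hp hr hm)
      (succ_mul_le_of_lt_div hq hr hm) (fun h => hpq (by rw [h])))]
    simp

lemma hyperDeg_hypergraph (hk : 2 ≤ k) (hr : r < k) (hm : d * k ≤ m) (v : Vertex k m r) :
    hyperDeg (hypergraph k m r d) v =
      #{q ∈ Ico 1 d ×ˢ univ | v ∈ line q.1 q.2} + #{x | v ∈ column d x} +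
        #{l ∈ range (d * r / k) | v ∈ block l} := by
  rw [hypergraph, hyperDeg_image (injOn_of_card_inter_le_one hk (fun p hp => card_edge hr hm hp)
    (fun p hp q hq => card_edge_inter_edge_le_one hr hm hp hq)), index, card_filter_disjSum,
    card_filter_disjSum, add_assoc]
  rfl

lemma card_filter_inl_mem_column {i : Fin k} {y : ZMod m} :
    #{x | (.inl (i, y) : Vertex k m r) ∈ column d x} =
      if i ≠ 0 ∨ d * r ≤ y.val then 1 else 0 := by
  simp only [inl_mem_column]
  split_ifs with h
  · refine card_eq_one.2 ⟨y, ?_⟩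
    ext x
    simp only [mem_filter, mem_univ, true_and, mem_singleton]
    exact ⟨fun hx => hx.1.symm, fun hx => ⟨hx.symm, hx ▸ h⟩⟩
  · exact card_eq_zero.2 (filter_eq_empty_iff.2 fun x _ ⟨hy, hx⟩ => h (hy ▸ hx))

lemma card_filter_inr_mem_column (hd : 1 ≤ d) (hr : r < k) (hm : d * k ≤ m) {s : Fin r} :
    #{x : ZMod m | (.inr s : Vertex k m r) ∈ column d x} = d := by
  have : ∀ x : ZMod m,
      (.inr s : Vertex k m r) ∈ column d x ↔ x.val ∈ Ico (s * d) (s * d + d) := by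
    intro x
    rw [inr_mem_column, mem_Ico, Nat.div_eq_iff hd]
    have := s.isLt
    constructor
    · omega
    · intro h
      refine ⟨?_, by omega⟩
      nlinarith
  have hs : s * d + d ≤ m := by nlinarith [s.isLt]
  rw [filter_congr fun x _ => this x, ZMod.card_filter_val_mem fun q hq => by
    rw [mem_Ico] at hq; omega, Nat.card_Ico, Nat.add_sub_cancel_left]

lemma hyperDeg_inl (hd : 1 ≤ d) (hk : 2 ≤ k) (hr : r < k) (hm : d * k ≤ m) (i : Fin k)
    (y : ZMod m) :
    hyperDeg (hypergraph k m r d) (.inl (i, y)) =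
      if i = 0 ∧ d * r / k * k ≤ y.val ∧ y.val < d * r then d - 1 else d := by
  rw [hyperDeg_hypergraph hk hr hm, card_filter_inl_mem_line, card_filter_inl_mem_column,
    card_filter_inl_mem_block hr hm]
  have := Nat.div_mul_le_self (d * r) k
  by_cases hi : i = 0
  · simp only [hi, ne_eq, not_true_eq_false, false_or, true_and]
    split_ifs <;> omega
  · simp only [hi, ne_eq, not_false_eq_true, true_or, false_and, if_true, if_false]
    omega

lemma hyperDeg_inr (hd : 1 ≤ d) (hk : 2 ≤ k) (hr : r < k) (hm : d * k ≤ m) (s : Fin r) :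
    hyperDeg (hypergraph k m r d) (.inr s) = d := by
  rw [hyperDeg_hypergraph hk hr hm, card_filter_inr_mem_column hd hr hm,
    filter_false_of_mem (by simp), filter_false_of_mem (by simp)]
  simp

lemma filter_hyperDeg_eq_sub_one (hd : 1 ≤ d) (hk : 2 ≤ k) (hr : r < k) (hm : d * k ≤ m) :
    ({v | hyperDeg (hypergraph k m r d) v = d - 1} : Finset (Vertex k m r)) =
      ({y | y.val ∈ Ico (d * r / k * k) (d * r)} : Finset (ZMod m)).map
        ⟨fun y => .inl (0, y), fun _ _ h => (Prod.ext_iff.1 (Sum.inl_injective h)).2⟩ := by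
  ext (⟨i, y⟩ | s)
  · simp only [mem_filter, mem_univ, true_and, mem_map, hyperDeg_inl hd hk hr hm, mem_Ico]
    split_ifs with h
    · exact iff_of_true rfl ⟨y, h.2, by rw [h.1]; rfl⟩
    · refine iff_of_false (by omega) fun ⟨a, ha, he⟩ => h ?_
      obtain ⟨rfl, rfl⟩ := Prod.ext_iff.1 (Sum.inl_injective he)
      exact ⟨rfl, ha⟩
  · refine iff_of_false (fun h => ?_) (by simp)
    rw [mem_filter, hyperDeg_inr hd hk hr hm] at h
    omega

theorem isLinearNearlyRegular_hypergraph (hd : 1 ≤ d) (hk : 2 ≤ k) (hr : r < k)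
    (hm : d * k ≤ m) : IsLinearNearlyRegular k d (hypergraph k m r d) where
  card_eq := by
    simp only [hypergraph, forall_mem_image]
    exact fun p hp => card_edge hr hm hp
  hyperDeg_eq := by
    rintro (⟨i, y⟩ | s)
    · rw [hyperDeg_inl hd hk hr hm]
      split_ifs <;> simp
    · exact .inl (hyperDeg_inr hd hk hr hm s)
  card_filter_hyperDeg_lt := by
    rw [filter_hyperDeg_eq_sub_one hd hk hr hm, card_map,
      ZMod.card_filter_val_mem fun q hq => by rw [mem_Ico] at hq; nlinarith, Nat.card_Ico]
    have := Nat.div_add_mod' (d * r) k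
    have := Nat.mod_lt (d * r) (by omega : 0 < k)
    omega
  card_inter_le_one := by
    simp only [hypergraph, forall_mem_image]
    exact fun p hp q hq hne => card_edge_inter_edge_le_one hr hm hp hq (fun h => hne (h ▸ rfl))

end LinearNearlyRegular

/-- For all `d ≥ 1`, `k ≥ 2` and all sufficiently large `n`, there exists a
linear nearly-`d`-regular `k`-uniform hypergraph on `n` vertices: every vertex
has degree `d` or `d - 1`, fewer than `k` vertices have degree `d - 1`, and any
two distinct edges intersect in at most one vertex. -/
theorem exists_linear_nearly_regular_uniform_hypergraph (d k : ℕ) (hd : 1 ≤ d) (hk : 2 ≤ k) :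
    ∃ N : ℕ, ∀ n : ℕ, N ≤ n → ∃ H : Finset (Finset (Fin n)),
      (∀ e ∈ H, e.card = k) ∧
      (∀ v : Fin n, hyperDeg H v = d ∨ hyperDeg H v = d - 1) ∧
      (Finset.univ.filter (fun v : Fin n => hyperDeg H v = d - 1)).card < k ∧
      (∀ e ∈ H, ∀ f ∈ H, e ≠ f → (e ∩ f).card ≤ 1) := by
  refine ⟨d * k * k, fun n hn => ?_⟩
  have hk0 : 0 < k := by omega
  have hm : d * k ≤ n / k := (Nat.le_div_iff_mul_le hk0).2 hn
  have : NeZero k := ⟨hk0.ne'⟩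
  have : NeZero (n / k) := ⟨by nlinarith⟩
  have hcard : Fintype.card (LinearNearlyRegular.Vertex k (n / k) (n % k)) = n := by
    simp [LinearNearlyRegular.Vertex, ZMod.card, Nat.div_add_mod]
  obtain ⟨h₁, h₂, h₃, h₄⟩ := (LinearNearlyRegular.isLinearNearlyRegular_hypergraph hd hk
    (Nat.mod_lt n hk0) hm).map_equiv (Fintype.equivFinOfCardEq hcard)
  exact ⟨_, h₁, h₂, h₃, h₄⟩
end

section
/- If H is a k-uniform Berge-K_{1,ℓ}-saturated hypergraph on n vertices and A is the set of vertices of H having degree less than ℓ−1, then every k-element subset of A is an edge of H. -/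
/-- `H` contains a Berge-`K_{1,ℓ}`: a vertex `v`, `ℓ` distinct edges through `v`,
and `ℓ` distinct vertices `u i ≠ v` with `u i` in the `i`-th edge. -/
def BergeStar {V : Type*} (ℓ : ℕ) (H : Finset (Finset V)) : Prop :=
  ∃ (v : V) (f : Fin ℓ → Finset V) (u : Fin ℓ → V),
    Function.Injective f ∧ Function.Injective u ∧
    ∀ i, f i ∈ H ∧ v ∈ f i ∧ u i ∈ f i ∧ u i ≠ v

/-- If `H` is a `k`-uniform Berge-`K_{1,ℓ}`-saturated hypergraph and `A` is the
set of vertices of degree less than `ℓ - 1`, then every `k`-element subset of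
`A` is an edge of `H`. -/
theorem clique_on_low_degree_vertices {V : Type*} [Fintype V] [DecidableEq V]
    (k ℓ : ℕ) (H : Finset (Finset V))
    (huniform : ∀ e ∈ H, e.card = k)
    (hfree : ¬ BergeStar ℓ H)
    (hsat : ∀ e : Finset V, e.card = k → e ∉ H → BergeStar ℓ (insert e H))
    (A : Finset V) (hA : A = Finset.univ.filter (fun v => hyperDeg H v < ℓ - 1)) :
    ∀ e : Finset V, e ⊆ A → e.card = k → e ∈ H := by
  intro e heA hcard
  by_contra he
  obtain ⟨v, f, u, hf, hu, hall⟩ := hsat e hcard he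
  by_cases hex : ∃ i, f i = e
  · obtain ⟨i0, hi0⟩ := hex
    have hvA : v ∈ A := heA (hi0 ▸ (hall i0).2.1)
    rw [hA, Finset.mem_filter] at hvA
    have hsub : (Finset.univ.erase i0).image f ⊆ H.filter (fun e => v ∈ e) := by
      intro x hx
      obtain ⟨i, hi, rfl⟩ := Finset.mem_image.mp hx
      have hne : i ≠ i0 := (Finset.mem_erase.mp hi).1
      have hfi : f i ∈ H := by
        rcases Finset.mem_insert.mp (hall i).1 with h | h
        · exact absurd (hf (h.trans hi0.symm)) hne
        · exact h
      exact Finset.mem_filter.mpr ⟨hfi, (hall i).2.1⟩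
    have hcard' : ((Finset.univ.erase i0).image f).card = ℓ - 1 := by
      rw [Finset.card_image_of_injective _ hf, Finset.card_erase_of_mem (Finset.mem_univ _),
        Finset.card_univ, Fintype.card_fin]
    have := Finset.card_le_card hsub
    rw [hcard'] at this
    exact absurd (lt_of_le_of_lt this hvA.2) (lt_irrefl _)
  · push_neg at hex
    exact hfree ⟨v, f, u, hf, hu, fun i => by
      obtain ⟨h1, h2⟩ := hall i
      rcases Finset.mem_insert.mp h1 with h | h
      · exact absurd h (hex i)
      · exact ⟨h, h2⟩⟩
end

section
/- For every k ≥ 3 and ℓ ≥ 1, and all sufficiently large n, every k-uniform Berge-K_{1,ℓ}-saturated hypergraph on n vertices has at least min over a ∈ [n] with C(a−1, k−1) ≤ ℓ−2 of ⌈(ℓ−1)(n−a)/k⌉ + C(a, k) edges. -/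
/-!
Let `H` be a `k`-uniform Berge-`K_{1,ℓ}`-saturated hypergraph on `n` vertices and let `B` be the
set of vertices at which no Berge-`K_{1,ℓ-1}` is centred. Adding a missing edge creates a
Berge-`K_{1,ℓ}`, and deleting the new edge from it leaves a Berge-`K_{1,ℓ-1}` centred at a vertex of
that edge; hence every `k`-subset of `B` is already an edge. Each of the `n - |B|` other vertices
lies in at least `ℓ - 1` edges, none of them inside `B`, so double counting gives
`(ℓ - 1)(n - |B|) ≤ k · #{edges not inside B}`, and `|H| ≥ ⌈(ℓ - 1)(n - |B|)/k⌉ + C(|B|, k)`.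
If `a = |B|` violates `C(a - 1, k - 1) ≤ ℓ - 2`, then `k C(a, k) = a C(a - 1, k - 1) ≥ (ℓ - 1)(a - 1)`
and the choice `a = 1` gives a bound at least as small.
-/

open Finset

def CenteredBergeStar {V : Type*} (ℓ : ℕ) (H : Finset (Finset V)) (v : V) : Prop :=
  ∃ (f : Fin ℓ → Finset V) (u : Fin ℓ → V),
    Function.Injective f ∧ Function.Injective u ∧
    ∀ i, f i ∈ H ∧ v ∈ f i ∧ u i ∈ f i ∧ u i ≠ v

section BergeStar

variable {V : Type*} [DecidableEq V] {ℓ k : ℕ} {H : Finset (Finset V)}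

theorem exists_mem_centeredBergeStar_of_bergeStar_insert {e : Finset V}
    (hfree : ¬BergeStar (ℓ + 1) H) (hins : BergeStar (ℓ + 1) (insert e H)) :
    ∃ v ∈ e, CenteredBergeStar ℓ H v := by
  obtain ⟨v, f, u, hf, hu, hall⟩ := hins
  by_cases hnew : ∃ i₀, f i₀ = e
  · obtain ⟨i₀, rfl⟩ := hnew
    refine ⟨v, (hall i₀).2.1, f ∘ i₀.succAbove, u ∘ i₀.succAbove,
      hf.comp Fin.succAbove_right_injective, hu.comp Fin.succAbove_right_injective, fun j => ?_⟩
    obtain ⟨hmem, hv, hu, hne⟩ := hall (i₀.succAbove j)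
    refine ⟨(mem_insert.1 hmem).resolve_left fun h => ?_, hv, hu, hne⟩
    exact Fin.succAbove_ne i₀ j (hf h)
  · refine absurd ⟨v, f, u, hf, hu, fun i => ?_⟩ hfree
    obtain ⟨hmem, hv, hu, hne⟩ := hall i
    exact ⟨(mem_insert.1 hmem).resolve_left fun h => hnew ⟨i, h⟩, hv, hu, hne⟩

theorem CenteredBergeStar.le_card_filter_mem {v : V}
    (h : CenteredBergeStar ℓ H v) : ℓ ≤ #{e ∈ H | v ∈ e} := by
  obtain ⟨f, _, hf, _, hall⟩ := h
  simpa using card_le_card_of_injOn f (s := univ)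
    (fun i _ => mem_filter.2 ⟨(hall i).1, (hall i).2.1⟩) hf.injOn

theorem powersetCard_subset_of_bergeStar_saturated {B : Finset V}
    (hB : ∀ v ∈ B, ¬CenteredBergeStar ℓ H v) (hfree : ¬BergeStar (ℓ + 1) H)
    (hsat : ∀ e : Finset V, #e = k → e ∉ H → BergeStar (ℓ + 1) (insert e H)) :
    powersetCard k B ⊆ H := by
  intro e he
  rw [mem_powersetCard] at he
  by_contra heH
  obtain ⟨v, hve, hv⟩ := exists_mem_centeredBergeStar_of_bergeStar_insert hfree (hsat e he.2 heH)
  exact hB v (he.1 hve) hv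

variable [Fintype V]

theorem exists_mul_sub_add_mul_choose_le_mul_card (hunif : ∀ e ∈ H, #e = k)
    (hfree : ¬BergeStar (ℓ + 1) H)
    (hsat : ∀ e : Finset V, #e = k → e ∉ H → BergeStar (ℓ + 1) (insert e H)) :
    ∃ b ≤ Fintype.card V, ℓ * (Fintype.card V - b) + k * b.choose k ≤ k * #H := by
  classical
  set B : Finset V := {v | ¬CenteredBergeStar ℓ H v}
  set G : Finset V := {v | CenteredBergeStar ℓ H v}
  have hGB : #G + #B = Fintype.card V := card_filter_add_card_filter_not _
  have hinside : (#B).choose k ≤ #{e ∈ H | e ⊆ B} := by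
    rw [← card_powersetCard]
    refine card_le_card fun e he => mem_filter.2 ⟨?_, (mem_powersetCard.1 he).1⟩
    exact powersetCard_subset_of_bergeStar_saturated (fun v hv => (mem_filter.1 hv).2)
      hfree hsat he
  have hcross : #G * ℓ ≤ #{e ∈ H | ¬e ⊆ B} * k := by
    refine card_mul_le_card_mul (· ∈ ·) (fun v hv => ?_) fun e he => ?_
    · have hvB : v ∉ B := fun h => (mem_filter.1 h).2 (mem_filter.1 hv).2
      refine ((mem_filter.1 hv).2.le_card_filter_mem).trans (card_le_card fun e he => ?_)
      obtain ⟨heH, hve⟩ := mem_filter.1 he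
      exact mem_filter.2 ⟨mem_filter.2 ⟨heH, fun hsub => hvB (hsub hve)⟩, hve⟩
    · exact (card_le_card fun v hv => (mem_filter.1 hv).2).trans (hunif e (mem_filter.1 he).1).le
  have hsplit := card_filter_add_card_filter_not (s := H) (· ⊆ B)
  refine ⟨#B, hGB ▸ Nat.le_add_left _ _, ?_⟩
  rw [← hGB, Nat.add_sub_cancel, ← hsplit, mul_add]
  nlinarith

end BergeStar

theorem exists_choose_le_and_mul_sub_add_mul_choose_le {k ℓ n b : ℕ} (hk : 2 ≤ k) (hn : 1 ≤ n)
    (hb : b ≤ n) :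
    ∃ a, 1 ≤ a ∧ a ≤ n ∧ (a - 1).choose (k - 1) ≤ ℓ - 2 ∧
      (ℓ - 1) * (n - a) + k * a.choose k ≤ (ℓ - 1) * (n - b) + k * b.choose k := by
  by_cases hadm : 1 ≤ b ∧ (b - 1).choose (k - 1) ≤ ℓ - 2
  · exact ⟨b, hadm.1, hb, hadm.2, le_rfl⟩
  refine ⟨1, le_rfl, hn, by simp [Nat.choose_eq_zero_of_lt (by omega : 0 < k - 1)], ?_⟩
  rw [Nat.choose_eq_zero_of_lt (by omega : 1 < k), mul_zero, add_zero]
  obtain rfl | hb₁ := Nat.eq_zero_or_pos b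
  · exact (Nat.mul_le_mul_left _ (by omega)).trans (Nat.le_add_right _ _)
  have hchoose_ge : ℓ - 1 ≤ (b - 1).choose (k - 1) := by omega
  have hchoose : k * b.choose k = b * (b - 1).choose (k - 1) := by
    obtain ⟨b', rfl⟩ : ∃ b', b = b' + 1 := ⟨b - 1, by omega⟩
    obtain ⟨k', rfl⟩ : ∃ k', k = k' + 1 := ⟨k - 1, by omega⟩
    simpa [mul_comm] using (Nat.add_one_mul_choose_eq b' k').symm
  calc (ℓ - 1) * (n - 1) = (ℓ - 1) * (n - b) + (ℓ - 1) * (b - 1) := by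
        rw [← mul_add]; congr 1; omega
    _ ≤ (ℓ - 1) * (n - b) + k * b.choose k := by
        rw [hchoose, mul_comm b]
        exact Nat.add_le_add_left (Nat.mul_le_mul hchoose_ge (Nat.sub_le b 1)) _

theorem Nat.ceil_mul_div_add_le {ℓ m k c h : ℕ} (hk : 0 < k) (hle : ℓ * m + k * c ≤ k * h) :
    ⌈((ℓ : ℚ) * (m : ℚ)) / (k : ℚ)⌉₊ + c ≤ h := by
  have hc : c ≤ h := Nat.le_of_mul_le_mul_left (by omega) hk
  have hceil : ⌈((ℓ : ℚ) * (m : ℚ)) / (k : ℚ)⌉₊ ≤ h - c := by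
    rw [Nat.ceil_le, div_le_iff₀ (by exact_mod_cast hk)]
    exact_mod_cast (show ℓ * m ≤ (h - c) * k by rw [Nat.sub_mul, mul_comm h, mul_comm c]; omega)
  omega

theorem berge_star_saturation_lower_bound_general (k ℓ : ℕ) (hk : 3 ≤ k) :
    ∃ N : ℕ, ∀ n : ℕ, N ≤ n → ∀ H : Finset (Finset (Fin n)),
      (∀ e ∈ H, e.card = k) →
      ¬ BergeStar ℓ H →
      (∀ e : Finset (Fin n), e.card = k → e ∉ H → BergeStar ℓ (insert e H)) →
      sInf {m : ℕ | ∃ a : ℕ, 1 ≤ a ∧ a ≤ n ∧ Nat.choose (a - 1) (k - 1) ≤ ℓ - 2 ∧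
          m = Nat.ceil ((((ℓ - 1 : ℕ) : ℚ) * ((n - a : ℕ) : ℚ)) / (k : ℚ)) +
            Nat.choose a k}
        ≤ H.card := by
  refine ⟨1, fun n hn H hunif hfree hsat => ?_⟩
  obtain ⟨b, hbn, hb⟩ : ∃ b ≤ n, (ℓ - 1) * (n - b) + k * b.choose k ≤ k * #H := by
    rcases ℓ with _ | ℓ
    · exact ⟨0, Nat.zero_le n, by simp [Nat.choose_eq_zero_of_lt (by omega : 0 < k)]⟩
    · simpa using exists_mul_sub_add_mul_choose_le_mul_card hunif hfree hsat
  obtain ⟨a, ha₁, han, hadm, hab⟩ :=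
    exists_choose_le_and_mul_sub_add_mul_choose_le (k := k) (ℓ := ℓ) (by omega) hn hbn
  refine (Nat.sInf_le ?_).trans (Nat.ceil_mul_div_add_le (by omega) (hab.trans hb))
  exact ⟨a, ha₁, han, hadm, rfl⟩

/-- For `k ≥ 3`, `ℓ ≥ 1` and all sufficiently large `n`, every `k`-uniform
Berge-`K_{1,ℓ}`-saturated hypergraph on `n` vertices has at least
`min_{a ∈ [n], C(a-1,k-1) ≤ ℓ-2} (⌈(ℓ-1)(n-a)/k⌉ + C(a,k))` edges. -/
theorem berge_star_saturation_lower_bound (k ℓ : ℕ) (hk : 3 ≤ k) (hl : 1 ≤ ℓ) :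
    ∃ N : ℕ, ∀ n : ℕ, N ≤ n → ∀ H : Finset (Finset (Fin n)),
      (∀ e ∈ H, e.card = k) →
      ¬ BergeStar ℓ H →
      (∀ e : Finset (Fin n), e.card = k → e ∉ H → BergeStar ℓ (insert e H)) →
      sInf {m : ℕ | ∃ a : ℕ, 1 ≤ a ∧ a ≤ n ∧ Nat.choose (a - 1) (k - 1) ≤ ℓ - 2 ∧
          m = Nat.ceil ((((ℓ - 1 : ℕ) : ℚ) * ((n - a : ℕ) : ℚ)) / (k : ℚ)) +
            Nat.choose a k}
        ≤ H.card :=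
  berge_star_saturation_lower_bound_general k ℓ hk
end

section
/- Let H be the k-uniform hypergraph on vertex set A ∪ B with |A| = ℓ−2, ℓ ≥ k+2, whose edges are all k-sets intersecting B in at most one vertex. Then H contains no Berge-K_ℓ. -/
/-- `H` contains a Berge-`K_ℓ`: there are `ℓ` distinct core vertices `c i` and
an injection `φ` from the pairs `{i, j}` (encoded as `i < j`) into `E(H)` such
that `c i, c j ∈ φ {i, j}`. -/
def BergeComplete {V : Type*} (ℓ : ℕ) (H : Finset (Finset V)) : Prop :=
  ∃ (c : Fin ℓ → V) (φ : {p : Fin ℓ × Fin ℓ // p.1 < p.2} → Finset V),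
    Function.Injective c ∧ Function.Injective φ ∧
    ∀ p, φ p ∈ H ∧ c p.val.1 ∈ φ p ∧ c p.val.2 ∈ φ p

/-- The `k`-uniform hypergraph on `A ∪ B` with `|A| = ℓ - 2`, `ℓ ≥ k + 2`,
whose edges are all `k`-sets meeting `B` in at most one vertex, contains no
Berge-`K_ℓ`. -/
theorem construction_is_berge_complete_free {V : Type*} [Fintype V] [DecidableEq V]
    (k ℓ : ℕ) (hkl : k + 2 ≤ ℓ)
    (A B : Finset V) (hdisj : Disjoint A B) (hcover : A ∪ B = Finset.univ)
    (hA : A.card = ℓ - 2)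
    (H : Finset (Finset V))
    (hH : H = (Finset.powersetCard k (Finset.univ : Finset V)).filter
        (fun e => (e ∩ B).card ≤ 1)) :
    ¬ BergeComplete ℓ H := by
  rintro ⟨c, φ, hc, hφ, hall⟩
  -- indices whose core vertex lies in B
  set S : Finset (Fin ℓ) := Finset.univ.filter (fun i => c i ∈ B) with hS
  set T : Finset (Fin ℓ) := Finset.univ.filter (fun i => c i ∉ B) with hT
  have hmapT : ∀ i ∈ T, c i ∈ A := by
    intro i hi
    have hnb : c i ∉ B := (Finset.mem_filter.mp hi).2
    have : c i ∈ A ∪ B := by rw [hcover]; exact Finset.mem_univ _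
    rcases Finset.mem_union.mp this with h | h
    · exact h
    · exact absurd h hnb
  have hTcard : T.card ≤ ℓ - 2 := by
    rw [← hA]
    exact Finset.card_le_card_of_injOn c hmapT (fun a _ b _ h => hc h)
  have hST : S.card + T.card = ℓ := by
    have := Finset.card_filter_add_card_filter_not
      (s := (Finset.univ : Finset (Fin ℓ))) (p := fun i => c i ∈ B)
    simpa [hS, hT] using this
  have hScard : 2 ≤ S.card := by omega
  obtain ⟨i, hi, j, hj, hij⟩ := Finset.one_lt_card.mp hScard
  have hiB : c i ∈ B := (Finset.mem_filter.mp hi).2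
  have hjB : c j ∈ B := (Finset.mem_filter.mp hj).2
  -- wlog i < j
  rcases lt_or_gt_of_ne hij with hlt | hlt
  · obtain ⟨he, h1, h2⟩ := hall ⟨(i, j), hlt⟩
    rw [hH, Finset.mem_filter] at he
    have hsub : ({c i, c j} : Finset V) ⊆ (φ ⟨(i, j), hlt⟩ ∩ B) := by
      intro x hx
      rcases Finset.mem_insert.mp hx with rfl | hx
      · exact Finset.mem_inter.mpr ⟨h1, hiB⟩
      · rcases Finset.mem_singleton.mp hx with rfl
        exact Finset.mem_inter.mpr ⟨h2, hjB⟩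
    have h2le := Finset.card_le_card hsub
    rw [Finset.card_pair (fun h => hij (hc h))] at h2le
    omega
  · obtain ⟨he, h2, h1⟩ := hall ⟨(j, i), hlt⟩
    rw [hH, Finset.mem_filter] at he
    have hsub : ({c i, c j} : Finset V) ⊆ (φ ⟨(j, i), hlt⟩ ∩ B) := by
      intro x hx
      rcases Finset.mem_insert.mp hx with rfl | hx
      · exact Finset.mem_inter.mpr ⟨h1, hiB⟩
      · rcases Finset.mem_singleton.mp hx with rfl
        exact Finset.mem_inter.mpr ⟨h2, hjB⟩
    have h2le := Finset.card_le_card hsub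
    rw [Finset.card_pair (fun h => hij (hc h))] at h2le
    omega
end
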